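/- arXiv:math/0311167 — 5 statements merged into one kernel-verified Lean document; each statement's English description precedes it below -/
import Mathlib

section
/- Let K be a finite simplicial complex, R a commutative ring, and D^K : cat(K)^op → Mod_R a functor on the opposite of the face poset of K. Suppose D^K is part of a twin pair: there is also a functor D_K : cat(K) → Mod_R with the same object values, such that D^K(p) ∘ D_K(i) = D_K(j) ∘ D^K(q) for every pullback square σ∩σ' ⊆ σ' ⊆ τ, σ∩σ' ⊆ σ ⊆ τ in cat(K) (where p, q are the opposites of the inclusions σ' ⊆ τ and σ∩σ' ⊆ σ). Then for every face ρ of K, the natural map D^K(ρ) → lim_{σ ⊊ ρ} D^K(σ) is surjective. -/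
/-- Let `K` be a finite simplicial complex, and let
`(C, D)` be a twin pair of diagrams of `R`-modules on the face poset of `K`
(`C = Dcov` covariant along inclusions, `D = Dcon` contravariant, with equal object values,
satisfying the twin compatibility on pullback squares).  Then for every face `ρ` of `K`, the
natural map `D(ρ) → lim_{σ ⊊ ρ} D(σ)` is surjective, i.e. `D` is fat. -/
theorem stmt_3 (R : Type*) [CommRing R] (V : Type*) [Fintype V] [DecidableEq V]
    (K : Finset (Finset V))
    (hdown : ∀ σ ∈ K, ∀ ρ ⊆ σ, ρ ∈ K) (hempty : ∅ ∈ K)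
    (D : Finset V → Type*) [∀ σ, AddCommGroup (D σ)] [∀ σ, Module R (D σ)]
    -- the contravariant functor `D^K` on `cat(K)^op`
    (Dcon : ∀ ⦃σ τ : Finset V⦄, σ ⊆ τ → (D τ →ₗ[R] D σ))
    -- the covariant functor `D_K` on `cat(K)`, with the same object values
    (Dcov : ∀ ⦃σ τ : Finset V⦄, σ ⊆ τ → (D σ →ₗ[R] D τ))
    -- functoriality
    (hconId : ∀ σ : Finset V, Dcon (Finset.Subset.refl σ) = LinearMap.id)
    (hcovId : ∀ σ : Finset V, Dcov (Finset.Subset.refl σ) = LinearMap.id)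
    (hconComp : ∀ ⦃σ τ υ : Finset V⦄ (h₁ : σ ⊆ τ) (h₂ : τ ⊆ υ),
      (Dcon h₁).comp (Dcon h₂) = Dcon (h₁.trans h₂))
    (hcovComp : ∀ ⦃σ τ υ : Finset V⦄ (h₁ : σ ⊆ τ) (h₂ : τ ⊆ υ),
      (Dcov h₂).comp (Dcov h₁) = Dcov (h₁.trans h₂))
    -- the twin condition `D^K(p') ∘ D_K(i) = D_K(j') ∘ D^K(q)` for every pullback square
    (htwin : ∀ ⦃σ σ' τ : Finset V⦄, σ ∈ K → σ' ∈ K → τ ∈ K →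
      ∀ (i : σ ⊆ τ) (i' : σ' ⊆ τ),
      (Dcon i').comp (Dcov i) =
        (Dcov (Finset.inter_subset_right : σ ∩ σ' ⊆ σ')).comp
          (Dcon (Finset.inter_subset_left : σ ∩ σ' ⊆ σ))) :
    -- conclusion: `D^K` is fat
    ∀ ρ ∈ K, ∀ u : (σ : Finset V) → σ ⊂ ρ → D σ,
      (∀ σ τ (hσ : σ ⊂ ρ) (hτ : τ ⊂ ρ) (hστ : σ ⊆ τ), Dcon hστ (u τ hτ) = u σ hσ) →
      ∃ x : D ρ, ∀ σ (hσ : σ ⊂ ρ), Dcon hσ.subset x = u σ hσ := by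
    classical
  intro ρ hρ u hu
  refine ⟨∑ T ∈ ρ.powerset, if h : T ⊆ ρ ∧ T.Nonempty then
      ((-1:ℤ)^(T.card+1)) • Dcov (Finset.sdiff_subset) (u (ρ \ T)
        (Finset.sdiff_ssubset h.1 h.2)) else 0, ?_⟩
  intro σ hσ
  have hσρ : σ ⊆ ρ := hσ.subset
  have hσK : σ ∈ K := hdown ρ hρ σ hσρ
  have hρσne : (ρ \ σ).Nonempty :=
    Finset.sdiff_nonempty.mpr (fun h => hσ.ne (Finset.Subset.antisymm hσρ h))
  set G : Finset V → D σ := fun S =>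
    if h : S ⊆ σ then Dcov h (u S (lt_of_le_of_lt h hσ)) else 0 with hG
  have key : ∀ S S' (e : S = S') (h : S ⊆ σ) (p : S ⊂ ρ),
      Dcov h (u S p) = G S' := by
    intro S S' e h p; subst e
    rw [hG]; simp only []; rw [dif_pos h]
  have step1 : Dcon hσ.subset (∑ T ∈ ρ.powerset, if h : T ⊆ ρ ∧ T.Nonempty then
      ((-1:ℤ)^(T.card+1)) • Dcov (Finset.sdiff_subset) (u (ρ \ T)
        (Finset.sdiff_ssubset h.1 h.2)) else 0)
      = ∑ T ∈ ρ.powerset, if _ : T ⊆ ρ ∧ T.Nonempty then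
          ((-1:ℤ)^(T.card+1)) • G (σ \ T) else 0 := by
    rw [map_sum]
    refine Finset.sum_congr rfl fun T _ => ?_
    by_cases h : T ⊆ ρ ∧ T.Nonempty
    · rw [dif_pos h, dif_pos h, map_zsmul]
      congr 1
      have hTK : ρ \ T ∈ K := hdown ρ hρ _ Finset.sdiff_subset
      have htw := congrFun (congrArg DFunLike.coe
        (htwin hTK hσK hρ Finset.sdiff_subset hσ.subset))
        (u (ρ \ T) (Finset.sdiff_ssubset h.1 h.2))
      simp only [LinearMap.coe_comp, Function.comp_apply] at htw
      rw [htw]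
      have hmem : (ρ \ T) ∩ σ ⊂ ρ := lt_of_le_of_lt Finset.inter_subset_right hσ
      rw [hu ((ρ \ T) ∩ σ) (ρ \ T) hmem (Finset.sdiff_ssubset h.1 h.2)
        Finset.inter_subset_left]
      have e : (ρ \ T) ∩ σ = σ \ T := by
        ext a
        simp only [Finset.mem_inter, Finset.mem_sdiff]
        exact ⟨fun ⟨⟨_, h2⟩, h3⟩ => ⟨h3, h2⟩, fun ⟨h1, h2⟩ => ⟨⟨hσρ h1, h2⟩, h1⟩⟩
      exact key _ _ e Finset.inter_subset_right hmem
    · rw [dif_neg h, dif_neg h, map_zero]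
  rw [step1]
  have step2 : (∑ T ∈ ρ.powerset, if _ : T ⊆ ρ ∧ T.Nonempty then
          ((-1:ℤ)^(T.card+1)) • G (σ \ T) else 0)
      = ∑ p ∈ σ.powerset ×ˢ (ρ \ σ).powerset,
          if _ : p.1 ∪ p.2 ⊆ ρ ∧ (p.1 ∪ p.2).Nonempty then
            ((-1:ℤ)^((p.1 ∪ p.2).card+1)) • G (σ \ (p.1 ∪ p.2)) else 0 := by
    refine Finset.sum_nbij' (fun T => (T ∩ σ, T \ σ)) (fun p => p.1 ∪ p.2)
      ?_ ?_ ?_ ?_ ?_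
    · intro T hT
      simp only [Finset.mem_powerset] at hT ⊢
      rw [Finset.mem_product]
      exact ⟨Finset.mem_powerset.mpr Finset.inter_subset_right,
        Finset.mem_powerset.mpr (fun a ha => by
          simp only [Finset.mem_sdiff] at ha ⊢
          exact ⟨hT ha.1, ha.2⟩)⟩
    · intro p hp
      rw [Finset.mem_product] at hp
      simp only [Finset.mem_powerset] at hp ⊢
      exact Finset.union_subset (hp.1.trans hσρ) (hp.2.trans Finset.sdiff_subset)
    · intro T hT
      show T ∩ σ ∪ T \ σ = T
      rw [Finset.union_comm]; exact Finset.sdiff_union_inter T σ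
    · intro p hp
      rw [Finset.mem_product] at hp
      simp only [Finset.mem_powerset] at hp
      have h1 : (p.1 ∪ p.2) ∩ σ = p.1 := by
        ext a
        simp only [Finset.mem_inter, Finset.mem_union, Finset.mem_sdiff]
        constructor
        · rintro ⟨h | h, h2⟩
          · exact h
          · exact absurd h2 (Finset.mem_sdiff.mp (hp.2 h)).2
        · exact fun h => ⟨Or.inl h, hp.1 h⟩
      have h2 : (p.1 ∪ p.2) \ σ = p.2 := by
        ext a
        simp only [Finset.mem_sdiff, Finset.mem_union]
        constructor
        · rintro ⟨h | h, h2⟩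
          · exact absurd (hp.1 h) h2
          · exact h
        · exact fun h => ⟨Or.inr h, (Finset.mem_sdiff.mp (hp.2 h)).2⟩
      ext <;> simp [h1, h2]
    · intro T hT
      rw [show T ∩ σ ∪ T \ σ = T from by rw [Finset.union_comm]; exact Finset.sdiff_union_inter T σ]
  rw [step2, Finset.sum_product]
  have hGσ : G σ = u σ hσ := by
    rw [hG]; simp only []
    rw [dif_pos (Finset.Subset.refl σ), hcovId]
    rfl
  rw [show (u σ hσ) = G σ from hGσ.symm]
  refine Finset.sum_eq_single_of_mem ∅ (Finset.mem_powerset.mpr (Finset.empty_subset σ)) ?_ |>.trans ?_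
  · -- A ≠ ∅ : inner sum is 0
    intro A hA hAne
    have hAnon : A.Nonempty := Finset.nonempty_iff_ne_empty.mpr hAne
    have hAσ : A ⊆ σ := Finset.mem_powerset.mp hA
    have hterm : ∀ U ∈ (ρ \ σ).powerset,
        (if _ : A ∪ U ⊆ ρ ∧ (A ∪ U).Nonempty then
          ((-1:ℤ)^((A ∪ U).card+1)) • G (σ \ (A ∪ U)) else 0)
        = (((-1:ℤ)^(A.card+1)) * ((-1:ℤ)^U.card)) • G (σ \ A) := by
      intro U hU
      have hUρσ : U ⊆ ρ \ σ := Finset.mem_powerset.mp hU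
      have hc : A ∪ U ⊆ ρ ∧ (A ∪ U).Nonempty :=
        ⟨Finset.union_subset (hAσ.trans hσρ) (hUρσ.trans Finset.sdiff_subset),
          hAnon.mono Finset.subset_union_left⟩
      rw [dif_pos hc]
      have hdisj : Disjoint A U := by
        refine Finset.disjoint_left.mpr fun a ha hau => ?_
        exact (Finset.mem_sdiff.mp (hUρσ hau)).2 (hAσ ha)
      have hcard : (A ∪ U).card = A.card + U.card := Finset.card_union_of_disjoint hdisj
      have hsd : σ \ (A ∪ U) = σ \ A := by
        ext a
        simp only [Finset.mem_sdiff, Finset.mem_union]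
        constructor
        · rintro ⟨h1, h2⟩; exact ⟨h1, fun h => h2 (Or.inl h)⟩
        · rintro ⟨h1, h2⟩
          refine ⟨h1, fun h => ?_⟩
          rcases h with h | h
          · exact h2 h
          · exact (Finset.mem_sdiff.mp (hUρσ h)).2 h1
      rw [hcard, hsd]
      congr 1
      ring
    rw [Finset.sum_congr rfl hterm, ← Finset.sum_smul]
    rw [← Finset.mul_sum, Finset.sum_powerset_neg_one_pow_card_of_nonempty hρσne]
    simp
  · -- A = ∅ : term is G σ
    have hterm : ∀ U ∈ (ρ \ σ).powerset,
        (if _ : (∅ : Finset V) ∪ U ⊆ ρ ∧ ((∅ : Finset V) ∪ U).Nonempty then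
          ((-1:ℤ)^(((∅ : Finset V) ∪ U).card+1)) • G (σ \ ((∅ : Finset V) ∪ U)) else 0)
        = ((-1:ℤ)^(U.card+1) + if U = ∅ then 1 else 0) • G (σ \ U) := by
      intro U hU
      rw [Finset.empty_union]
      by_cases hUe : U = ∅
      · subst hUe
        rw [dif_neg (by simp), if_pos rfl]
        norm_num
      · have hUnon : U.Nonempty := Finset.nonempty_iff_ne_empty.mpr hUe
        rw [dif_pos ⟨(Finset.mem_powerset.mp hU).trans Finset.sdiff_subset, hUnon⟩,
          if_neg hUe]
        norm_num
    rw [Finset.sum_congr rfl hterm]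
    have hsdU : ∀ U ∈ (ρ \ σ).powerset,
        ((-1:ℤ)^(U.card+1) + if U = ∅ then 1 else 0) • G (σ \ U)
        = (if U = ∅ then (1:ℤ) else 0) • G σ + ((-1:ℤ)^(U.card+1)) • G (σ \ U) := by
      intro U hU
      by_cases hUe : U = ∅
      · subst hUe; simp [add_smul]
      · simp [hUe]
    rw [Finset.sum_congr rfl hsdU, Finset.sum_add_distrib]
    have h1 : (∑ U ∈ (ρ \ σ).powerset, (if U = ∅ then (1:ℤ) else 0) • G σ) = G σ := by
      rw [← Finset.sum_smul, Finset.sum_ite_eq' (ρ \ σ).powerset ∅ (fun _ => (1:ℤ))]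
      rw [if_pos (Finset.mem_powerset.mpr (Finset.empty_subset _))]
      simp
    have h2 : (∑ U ∈ (ρ \ σ).powerset, ((-1:ℤ)^(U.card+1)) • G (σ \ U)) = 0 := by
      -- each σ \ U with U ⊆ ρ \ σ equals σ
      have : ∀ U ∈ (ρ \ σ).powerset, ((-1:ℤ)^(U.card+1)) • G (σ \ U)
          = ((-1:ℤ)^(U.card+1)) • G σ := by
        intro U hU
        have hUρσ : U ⊆ ρ \ σ := Finset.mem_powerset.mp hU
        have : σ \ U = σ := by
          ext a
          simp only [Finset.mem_sdiff]
          exact ⟨fun h => h.1, fun h => ⟨h, fun hu' =>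
            (Finset.mem_sdiff.mp (hUρσ hu')).2 h⟩⟩
        rw [this]
      rw [Finset.sum_congr rfl this, ← Finset.sum_smul]
      have : (∑ U ∈ (ρ \ σ).powerset, (-1:ℤ)^(U.card+1)) = 0 := by
        have := Finset.sum_powerset_neg_one_pow_card_of_nonempty hρσne (α := V)
        calc (∑ U ∈ (ρ \ σ).powerset, (-1:ℤ)^(U.card+1))
            = ∑ U ∈ (ρ \ σ).powerset, (-1) * (-1:ℤ)^U.card := by
              refine Finset.sum_congr rfl fun U _ => ?_; ring
          _ = (-1) * ∑ U ∈ (ρ \ σ).powerset, (-1:ℤ)^U.card := by rw [Finset.mul_sum]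
          _ = 0 := by rw [this]; ring
      rw [this, zero_smul]
    rw [h1, h2, add_zero]
end

section
/- Let K be a finite simplicial complex on V and R a commutative ring. For fixed j ≥ 0, consider the diagram F : cat(K)^op → Mod_R where F(σ) is the free R-module on monomials v^M with |M| = j and support of M contained in σ, and where the map for τ ⊇ σ fixes v^M if supp(M) ⊆ σ and sends it to 0 otherwise. Then F is fat: F(σ) → lim_{ρ ⊊ σ} F(ρ) is surjective for every face σ. -/
/-!
A compatible family `u ρ` (`ρ ⊊ σ`) determines, for every monomial `x^m` with `supp m ⊊ σ`,
the coefficient `coeff m (u (supp m))`, and compatibility says that every `u ρ` has exactly these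
coefficients on the monomials it can contain. So the polynomial carrying these coefficients
(and no monomials with support `σ`) is a lift: it is supported on `σ`, homogeneous of degree `j`
because each `u ρ` is, and projects onto each `u ρ`.
-/

open MvPolynomial

/-- The projection `R[x_v : v ∈ V] → R[x_v : v ∈ σ]` (realised inside `R[x_v : v ∈ V]`),
sending `x_v` to `x_v` if `v ∈ σ` and to `0` otherwise. -/
noncomputable def faceProj (R : Type*) [CommRing R] {V : Type*} [DecidableEq V]
    (σ : Finset V) : MvPolynomial V R →ₐ[R] MvPolynomial V R :=
  aeval (fun v => if v ∈ σ then X v else 0)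

section Gluing

variable {R : Type*} [CommRing R] {V : Type*} [DecidableEq V]

lemma faceProj_monomial (τ : Finset V) (d : V →₀ ℕ) (c : R) :
    faceProj R τ (monomial d c) = if d.support ⊆ τ then monomial d c else 0 := by
  rw [faceProj, aeval_monomial]
  split_ifs with h
  · rw [monomial_eq]
    congr 1
    exact Finsupp.prod_congr fun v hv => by rw [if_pos (h hv)]
  · obtain ⟨v, hv, hvτ⟩ := Finset.not_subset.mp h
    rw [Finsupp.prod, Finset.prod_eq_zero hv, mul_zero]
    rw [if_neg hvτ, zero_pow (Finsupp.mem_support_iff.mp hv)]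

lemma coeff_faceProj (τ : Finset V) (q : MvPolynomial V R) (m : V →₀ ℕ) :
    coeff m (faceProj R τ q) = if m.support ⊆ τ then coeff m q else 0 := by
  induction q using MvPolynomial.induction_on' with
  | monomial d c =>
    rw [faceProj_monomial]
    by_cases hdm : d = m
    · subst hdm
      split_ifs <;> simp
    · split_ifs <;> simp [coeff_monomial, hdm]
  | add p q hp hq =>
    rw [map_add, coeff_add, coeff_add, hp, hq]
    split_ifs <;> simp

lemma coeff_eq_of_faceProj_compat {u : Finset V → MvPolynomial V R} {ρ : Finset V}
    (hu : ∀ τ ⊆ ρ, faceProj R τ (u ρ) = u τ) (m : V →₀ ℕ) :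
    coeff m (u ρ) = if m.support ⊆ ρ then coeff m (u m.support) else 0 := by
  conv_lhs => rw [← hu ρ subset_rfl, coeff_faceProj]
  split_ifs with hm
  · rw [← hu _ hm, coeff_faceProj, if_pos subset_rfl]
  · rfl

noncomputable def glueBySupport (S : Finset (Finset V)) (u : Finset V → MvPolynomial V R) :
    MvPolynomial V R :=
  ∑ ρ ∈ S, ∑ d ∈ (u ρ).support with d.support = ρ, monomial d (coeff d (u ρ))

lemma coeff_glueBySupport (S : Finset (Finset V)) (u : Finset V → MvPolynomial V R)
    (m : V →₀ ℕ) :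
    coeff m (glueBySupport S u) = if m.support ∈ S then coeff m (u m.support) else 0 := by
  simp only [glueBySupport, coeff_sum, coeff_monomial, Finset.sum_ite_eq', Finset.mem_filter]
  have hslice : ∀ ρ, (if m ∈ (u ρ).support ∧ m.support = ρ then coeff m (u ρ) else 0) =
      if m.support = ρ then coeff m (u ρ) else 0 := fun ρ => by
    by_cases hm : m ∈ (u ρ).support
    · simp only [hm, true_and]
    · simp [notMem_support_iff.mp hm]
  simp only [hslice, Finset.sum_ite_eq]

lemma glueBySupport_mem_supported {S : Finset (Finset V)} {s : Set V}
    (hS : ∀ ρ ∈ S, ↑ρ ⊆ s) (u : Finset V → MvPolynomial V R) :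
    glueBySupport S u ∈ supported R s := by
  rw [mem_supported]
  intro v hv
  obtain ⟨m, hm, hvm⟩ := (mem_vars_iff_mem_support v).mp hv
  have hm := mem_support_iff.mp hm
  rw [coeff_glueBySupport] at hm
  split_ifs at hm with hmS
  · exact hS _ hmS hvm
  · exact absurd rfl hm

lemma glueBySupport_mem_homogeneousSubmodule {S : Finset (Finset V)}
    {u : Finset V → MvPolynomial V R} {j : ℕ} (hu : ∀ ρ ∈ S, u ρ ∈ homogeneousSubmodule V R j) :
    glueBySupport S u ∈ homogeneousSubmodule V R j := by
  rw [mem_homogeneousSubmodule]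
  intro m hm
  rw [coeff_glueBySupport] at hm
  split_ifs at hm with hmS
  · exact (mem_homogeneousSubmodule _ _).mp (hu _ hmS) hm
  · exact absurd rfl hm

lemma faceProj_glueBySupport {S : Finset (Finset V)} {u : Finset V → MvPolynomial V R}
    {ρ : Finset V} (hS : ∀ τ ⊆ ρ, τ ∈ S) (hu : ∀ τ ⊆ ρ, faceProj R τ (u ρ) = u τ) :
    faceProj R ρ (glueBySupport S u) = u ρ := by
  ext m
  rw [coeff_faceProj, coeff_glueBySupport, coeff_eq_of_faceProj_compat hu]
  by_cases hm : m.support ⊆ ρ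
  · rw [if_pos hm, if_pos (hS _ hm), if_pos hm]
  · rw [if_neg hm, if_neg hm]

end Gluing

theorem stmt_6_general (R : Type*) [CommRing R] (V : Type*) [DecidableEq V]
    (K : Finset (Finset V)) (j : ℕ) :
    ∀ σ ∈ K, ∀ u : (ρ : Finset V) → ρ ⊂ σ → MvPolynomial V R,
      -- the family takes values in `F(ρ)`
      (∀ ρ (hρ : ρ ⊂ σ), u ρ hρ ∈ supported R (↑ρ : Set V) ∧
          u ρ hρ ∈ homogeneousSubmodule V R j) →
      -- compatibility with the projection transition maps
      (∀ ρ ρ' (hρ : ρ ⊂ σ) (hρ' : ρ' ⊂ σ), ρ ⊆ ρ' →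
          faceProj R ρ (u ρ' hρ') = u ρ hρ) →
      -- the family lifts to an element of `F(σ)`
      ∃ p : MvPolynomial V R, p ∈ supported R (↑σ : Set V) ∧
        p ∈ homogeneousSubmodule V R j ∧
        ∀ ρ (hρ : ρ ⊂ σ), faceProj R ρ p = u ρ hρ := by
  intro σ _ u hu hcompat
  set U : Finset V → MvPolynomial V R := fun ρ => if h : ρ ⊂ σ then u ρ h else 0
  have hU : ∀ ρ (hρ : ρ ⊂ σ), U ρ = u ρ hρ := fun ρ hρ => dif_pos hρ
  refine ⟨glueBySupport σ.ssubsets U, ?_, ?_, fun ρ hρ => ?_⟩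
  · exact glueBySupport_mem_supported
      (fun ρ hρ => Finset.coe_subset.mpr (Finset.mem_ssubsets.mp hρ).subset) U
  · refine glueBySupport_mem_homogeneousSubmodule fun ρ hρ => ?_
    rw [hU ρ (Finset.mem_ssubsets.mp hρ)]
    exact (hu ρ _).2
  · have hτ : ∀ τ ⊆ ρ, τ ⊂ σ := fun τ hτ => lt_of_le_of_lt hτ hρ
    rw [← hU ρ hρ]
    refine faceProj_glueBySupport (fun τ h => Finset.mem_ssubsets.mpr (hτ τ h)) fun τ h => ?_
    rw [hU ρ hρ, hU τ (hτ τ h)]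
    exact hcompat τ ρ _ hρ h

/-- For a finite simplicial complex `K` on `V`, a commutative ring `R` and
`j ≥ 0`, the diagram `F : cat(K)^op → Mod_R` with `F(σ)` the free `R`-module on the
monomials `v^M` with `|M| = j` and `supp M ⊆ σ` (i.e. the degree-`j` homogeneous part of
`R[x_v : v ∈ σ]`), with projection transition maps, is fat: `F(σ) → lim_{ρ ⊊ σ} F(ρ)` is
surjective for every face `σ`. -/
theorem stmt_6 (R : Type*) [CommRing R] (V : Type*) [Fintype V] [DecidableEq V]
    (K : Finset (Finset V))
    (hdown : ∀ σ ∈ K, ∀ ρ ⊆ σ, ρ ∈ K) (hempty : ∅ ∈ K) (j : ℕ) :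
    ∀ σ ∈ K, ∀ u : (ρ : Finset V) → ρ ⊂ σ → MvPolynomial V R,
      -- the family takes values in `F(ρ)`
      (∀ ρ (hρ : ρ ⊂ σ), u ρ hρ ∈ supported R (↑ρ : Set V) ∧
          u ρ hρ ∈ homogeneousSubmodule V R j) →
      -- compatibility with the projection transition maps
      (∀ ρ ρ' (hρ : ρ ⊂ σ) (hρ' : ρ' ⊂ σ), ρ ⊆ ρ' →
          faceProj R ρ (u ρ' hρ') = u ρ hρ) →
      -- the family lifts to an element of `F(σ)`
      ∃ p : MvPolynomial V R, p ∈ supported R (↑σ : Set V) ∧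
        p ∈ homogeneousSubmodule V R j ∧
        ∀ ρ (hρ : ρ ⊂ σ), faceProj R ρ p = u ρ hρ :=
  stmt_6_general R V K j
end

section
/- Let K be a finite simplicial complex on V, J ⊂ K the subcomplex obtained by deleting a single maximal face μ, and F : cat(K)^op → Mod_R a fat diagram. Let G_* F|_J denote the right Kan extension along the inclusion cat(J)^op → cat(K)^op of the restriction of F to J. Then (G_* F|_J)(μ) ≅ lim_{σ ⊊ μ} F(σ), while (G_* F|_J)(σ) ≅ F(σ) for every face σ ≠ μ, and the natural transformation F → G_* F|_J is surjective on every object. -/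
/-- Let `K` be a finite simplicial complex, `μ` a maximal face,
`J = K \ {μ}`, and `F : cat(K)^op → Mod_R` a fat diagram.  The right Kan extension
`G_* F|_J` of the restriction of `F` to `J` along the inclusion `cat(J)^op → cat(K)^op` is
computed objectwise as `(G_* F|_J)(σ) = lim_{τ ∈ J, τ ⊆ σ} F(τ)`.  Then:
`(G_* F|_J)(σ) ≅ F(σ)` for every face `σ ≠ μ` (the canonical map is bijective),
`(G_* F|_J)(μ) ≅ lim_{τ ⊊ μ} F(τ)` (the index poset `{τ ∈ J | τ ⊆ μ}` is exactly the poset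
of proper subfaces of `μ`), and the canonical natural transformation `F → G_* F|_J` is
surjective on every object. -/
theorem stmt_7 (R : Type*) [CommRing R] (V : Type*) [Fintype V] [DecidableEq V]
    (K : Finset (Finset V))
    (hdown : ∀ σ ∈ K, ∀ ρ ⊆ σ, ρ ∈ K) (hempty : ∅ ∈ K)
    (μ : Finset V) (hμ : μ ∈ K) (hmax : ∀ σ ∈ K, μ ⊆ σ → σ = μ)
    (F : Finset V → Type*) [∀ σ, AddCommGroup (F σ)] [∀ σ, Module R (F σ)]
    (Fmap : ∀ ⦃σ τ : Finset V⦄, σ ⊆ τ → (F τ →ₗ[R] F σ))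
    (hId : ∀ σ : Finset V, Fmap (Finset.Subset.refl σ) = LinearMap.id)
    (hComp : ∀ ⦃σ τ υ : Finset V⦄ (h₁ : σ ⊆ τ) (h₂ : τ ⊆ υ),
      (Fmap h₁).comp (Fmap h₂) = Fmap (h₁.trans h₂))
    -- fatness of `F`
    (hfat : ∀ σ ∈ K, ∀ u : (ρ : Finset V) → ρ ⊂ σ → F ρ,
      (∀ ρ ρ' (hρ : ρ ⊂ σ) (hρ' : ρ' ⊂ σ) (h : ρ ⊆ ρ'), Fmap h (u ρ' hρ') = u ρ hρ) →
      ∃ x : F σ, ∀ ρ (hρ : ρ ⊂ σ), Fmap hρ.subset x = u ρ hρ) :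
    -- (1)  `F → G_* F|_J` is surjective on every object: every compatible family over
    --      `{τ ∈ J | τ ⊆ σ}` lifts to `F(σ)`
    (∀ σ ∈ K, ∀ u : (τ : Finset V) → τ ∈ K → τ ≠ μ → τ ⊆ σ → F τ,
      (∀ τ τ' (hτ : τ ∈ K) (hτ' : τ' ∈ K) (h₁ : τ ≠ μ) (h₁' : τ' ≠ μ)
          (h₂ : τ ⊆ σ) (h₂' : τ' ⊆ σ) (h : τ ⊆ τ'),
        Fmap h (u τ' hτ' h₁' h₂') = u τ hτ h₁ h₂) →
      ∃ x : F σ, ∀ τ (hτ : τ ∈ K) (h₁ : τ ≠ μ) (h₂ : τ ⊆ σ), Fmap h₂ x = u τ hτ h₁ h₂)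
    -- (2)  for `σ ≠ μ` the canonical map `F(σ) → (G_* F|_J)(σ)` is moreover injective,
    --      hence bijective
    ∧ (∀ σ ∈ K, σ ≠ μ → ∀ x x' : F σ,
        (∀ τ (hτ : τ ∈ K) (h₁ : τ ≠ μ) (h₂ : τ ⊆ σ), Fmap h₂ x = Fmap h₂ x') → x = x')
    -- (3)  at `μ` the indexing poset of the Kan extension is exactly the poset of proper
    --      subfaces of `μ`, so `(G_* F|_J)(μ) ≅ lim_{τ ⊊ μ} F(τ)`
    ∧ ({τ : Finset V | τ ∈ K ∧ τ ≠ μ ∧ τ ⊆ μ} = {τ : Finset V | τ ∈ K ∧ τ ⊂ μ}) := by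
  refine ⟨?_, ?_, ?_⟩
  · intro σ hσ u hcompat
    by_cases hσμ : σ = μ
    · subst hσμ
      have hu : ∀ ρ ρ' (hρ : ρ ⊂ σ) (hρ' : ρ' ⊂ σ) (h : ρ ⊆ ρ'),
          Fmap h (u ρ' (hdown σ hσ ρ' hρ'.subset) hρ'.ne hρ'.subset)
            = u ρ (hdown σ hσ ρ hρ.subset) hρ.ne hρ.subset := by
        intro ρ ρ' hρ hρ' h
        exact hcompat ρ ρ' _ _ hρ.ne hρ'.ne hρ.subset hρ'.subset h
      obtain ⟨x, hx⟩ := hfat σ hσ _ hu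
      refine ⟨x, ?_⟩
      intro τ hτ h₁ h₂
      have hss : τ ⊂ σ := lt_of_le_of_ne h₂ h₁
      exact hx τ hss
    · refine ⟨u σ hσ hσμ (Finset.Subset.refl σ), ?_⟩
      intro τ hτ h₁ h₂
      exact hcompat τ σ hτ hσ h₁ hσμ h₂ (Finset.Subset.refl σ) h₂
  · intro σ hσ hσμ x x' h
    have := h σ hσ hσμ (Finset.Subset.refl σ)
    rwa [hId, LinearMap.id_apply, LinearMap.id_apply] at this
  · ext τ
    simp only [Set.mem_setOf_eq]
    constructor
    · rintro ⟨h1, h2, h3⟩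
      exact ⟨h1, lt_of_le_of_ne h3 h2⟩
    · rintro ⟨h1, h2⟩
      exact ⟨h1, h2.ne, h2.subset⟩
end

section
/- Let V be a finite set with |V| = m, λ(1),...,λ(t) pairwise disjoint subsets with union λ of cardinality n, and L the simplicial complex of subsets of V containing no λ(k). Then every block lower-triangular matrix of the form [[M, 0], [N, Σ]] — where M ∈ GL(m−n, ℚ) acts on the span of V∖λ, N is arbitrary, and Σ is a permutation matrix permuting the elements of λ that preserves the partition {λ(1),...,λ(t)} up to permuting blocks of equal cardinality — induces a graded ℚ-algebra automorphism of the Stanley-Reisner ring ℚ[L]. -/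
/-!
The substitution is the linear change of variables `X v ↦ ∑ w, B w v • X w` for the matrix
`B = [[M, 0], [N, Σ]]`. Ordering `V` as `Λ ⊔ (V ∖ Λ)` makes `B` block triangular with diagonal
blocks a permutation matrix and `M`, so `B` is invertible and the substitution is an automorphism
of `ℚ[x_v]`, with inverse the substitution by `B⁻¹`. On `Λ` it is the renaming by `π`, so it maps
the generator `v_{λ k}` to `v_{λ (ρ k)}`; hence it maps the Stanley–Reisner ideal onto itself and
descends to the quotient.
-/

open MvPolynomial

namespace MvPolynomial

variable {R σ : Type*} [CommSemiring R] [Fintype σ]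

noncomputable def linearSubst (B : Matrix σ σ R) : MvPolynomial σ R →ₐ[R] MvPolynomial σ R :=
  aeval fun v => ∑ w, B w v • X w

theorem linearSubst_X (B : Matrix σ σ R) (v : σ) : linearSubst B (X v) = ∑ w, B w v • X w :=
  aeval_X _ _

theorem linearSubst_comp (B C : Matrix σ σ R) :
    (linearSubst B).comp (linearSubst C) = linearSubst (B * C) := by
  refine algHom_ext fun v => ?_
  simp only [AlgHom.comp_apply, linearSubst_X, map_sum, map_smul, Finset.smul_sum, smul_smul,
    Matrix.mul_apply, Finset.sum_smul]
  rw [Finset.sum_comm]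
  simp only [mul_comm]

theorem linearSubst_one [DecidableEq σ] : linearSubst (1 : Matrix σ σ R) = AlgHom.id R _ := by
  refine algHom_ext fun v => ?_
  simp [linearSubst_X, Matrix.one_apply, ite_smul]

noncomputable def linearSubstEquiv [DecidableEq σ] (B : (Matrix σ σ R)ˣ) :
    MvPolynomial σ R ≃ₐ[R] MvPolynomial σ R :=
  AlgEquiv.ofAlgHom (linearSubst B) (linearSubst ↑B⁻¹)
    (by rw [linearSubst_comp, Units.mul_inv, linearSubst_one])
    (by rw [linearSubst_comp, Units.inv_mul, linearSubst_one])

end MvPolynomial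

theorem Matrix.isUnit_of_perm_cols_of_isUnit_toSquareBlockProp {R n : Type*} [CommRing R]
    [Fintype n] [DecidableEq n] (B : Matrix n n R) (p : n → Prop) [DecidablePred p]
    (π : Equiv.Perm n) (hπ : ∀ v, p (π v) ↔ p v)
    (hB : ∀ u v, p v → B u v = if u = π v then 1 else 0)
    (hM : IsUnit (B.toSquareBlockProp fun v => ¬p v)) : IsUnit B := by
  have hperm : B.toSquareBlockProp p = (π.subtypePerm hπ)⁻¹.permMatrix R := by
    ext u v
    simp [toSquareBlockProp_def, hB u v v.2, PEquiv.toMatrix_apply, Equiv.symm_apply_eq,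
      Subtype.ext_iff]
  have hdet : B.det = (B.toSquareBlockProp p).det * (B.toSquareBlockProp fun v => ¬p v).det :=
    twoBlockTriangular_det B p fun u hu v hv => by
      rw [hB u v hv, if_neg fun h : u = π v => hu (h ▸ (hπ v).2 hv)]
  rw [isUnit_iff_isUnit_det, hdet, hperm, det_permutation]
  exact ((Equiv.Perm.sign _).isUnit.map (Int.castRingHom R)).mul
    ((isUnit_iff_isUnit_det _).mp hM)

theorem Ideal.map_span_range_of_equiv {R S ι ι' : Type*} [Semiring R] [Semiring S]
    (f : R →+* S) (a : ι → R) (b : ι' → S) (ρ : ι ≃ ι') (h : ∀ k, f (a k) = b (ρ k)) :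
    (Ideal.span (Set.range a)).map f = Ideal.span (Set.range b) := by
  rw [Ideal.map_span, ← Set.range_comp, show f ∘ a = b ∘ ρ from funext h,
    ρ.surjective.range_comp]

theorem stmt_11_general (V : Type*) [Fintype V] [DecidableEq V]
    (t : ℕ) (lam : Fin t → Finset V)
    (Lam : Finset V) (hLam : ∀ v, v ∈ Lam ↔ ∃ k, v ∈ lam k)
    (I : Ideal (MvPolynomial V ℚ))
    (hI : I = Ideal.span (Set.range fun k => ∏ v ∈ lam k, (X v : MvPolynomial V ℚ)))
    -- the matrix `[[M, 0], [N, Σ]]`: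
    -- `Σ` is a permutation of `Λ` permuting the blocks `λ k` (of equal cardinality)
    (π : Equiv.Perm V) (ρ : Equiv.Perm (Fin t))
    (hπ : ∀ k, (lam k).image π = lam (ρ k))
    -- the columns indexed by `V ∖ Λ`, with entries `M` in the rows of `V ∖ Λ` and
    -- arbitrary entries `N` in the rows of `Λ`
    (A : V → V → ℚ)
    -- `M` is invertible
    (hM : IsUnit (Matrix.of fun w v : {x : V // x ∉ Lam} => A w.1 v.1))
    -- the substitution on the generators
    (g : V → MvPolynomial V ℚ)
    (hg : ∀ v, g v = if v ∈ Lam then X (π v) else ∑ w : V, A w v • X w) :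
    ∃ e : (MvPolynomial V ℚ ⧸ I) ≃ₐ[ℚ] (MvPolynomial V ℚ ⧸ I),
      ∀ p : MvPolynomial V ℚ,
        e (Ideal.Quotient.mk I p) = Ideal.Quotient.mk I (aeval g p) := by
  have hπLam (v : V) : π v ∈ Lam ↔ v ∈ Lam := by
    simp only [hLam, ρ.surjective.exists (p := fun k => π v ∈ lam k), ← hπ,
      π.injective.mem_finset_image]
  set B : Matrix V V ℚ := .of fun u v => if v ∈ Lam then (if u = π v then 1 else 0) else A u v
  have hB : IsUnit B := by
    refine B.isUnit_of_perm_cols_of_isUnit_toSquareBlockProp (· ∈ Lam) π hπLam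
      (fun u v hv => by simp [B, hv]) ?_
    convert hM using 1
    ext u v
    simp [B, Matrix.toSquareBlockProp_def, v.2]
  have hBg : linearSubst B = aeval g := by
    refine congrArg aeval (funext fun v => ?_)
    by_cases hv : v ∈ Lam <;> simp [hg, B, hv, ite_smul]
  have hgen (k : Fin t) :
      aeval g (∏ v ∈ lam k, (X v : MvPolynomial V ℚ)) = ∏ v ∈ lam (ρ k), X v := by
    rw [map_prod, ← hπ k, Finset.prod_image π.injective.injOn]
    exact Finset.prod_congr rfl fun v hv => by rw [aeval_X, hg, if_pos ((hLam v).2 ⟨k, hv⟩)]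
  refine ⟨Ideal.quotientEquivAlg I I (linearSubstEquiv hB.unit) ?_, fun p => ?_⟩
  · rw [hI]
    exact (Ideal.map_span_range_of_equiv _ _ _ ρ fun k =>
      (DFunLike.congr_fun hBg _).trans (hgen k)).symm
  · exact congrArg (Ideal.Quotient.mk I) (DFunLike.congr_fun hBg p)

/-- Let `V` be a finite set with `|V| = m`, `λ 1, …, λ t` pairwise
disjoint subsets with union `Λ` of cardinality `n`, and `L` the complete intersection
complex of subsets of `V` containing no `λ k`, so that
`ℚ[L] = ℚ[x_v : v ∈ V]/(v_{λ 1}, …, v_{λ t})`.  Every block lower-triangular matrix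
`[[M, 0], [N, Σ]]` — `M ∈ GL(m − n, ℚ)` acting on the span of `V ∖ Λ`, `N` arbitrary, and
`Σ` a permutation of the elements of `Λ` carrying each block `λ k` onto a block `λ (ρ k)`
(necessarily of equal cardinality) — induces, by linear substitution on the degree-2
generators, a graded `ℚ`-algebra automorphism of `ℚ[L]`. -/
theorem stmt_11 (V : Type*) [Fintype V] [DecidableEq V]
    (t : ℕ) (lam : Fin t → Finset V)
    (hdisj : ∀ k l, k ≠ l → Disjoint (lam k) (lam l))
    (Lam : Finset V) (hLam : ∀ v, v ∈ Lam ↔ ∃ k, v ∈ lam k)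
    (I : Ideal (MvPolynomial V ℚ))
    (hI : I = Ideal.span (Set.range fun k => ∏ v ∈ lam k, (X v : MvPolynomial V ℚ)))
    -- the matrix `[[M, 0], [N, Σ]]`:
    -- `Σ` is a permutation of `Λ` permuting the blocks `λ k` (of equal cardinality)
    (π : Equiv.Perm V) (ρ : Equiv.Perm (Fin t))
    (hπ : ∀ k, (lam k).image π = lam (ρ k))
    -- the columns indexed by `V ∖ Λ`, with entries `M` in the rows of `V ∖ Λ` and
    -- arbitrary entries `N` in the rows of `Λ`
    (A : V → V → ℚ)
    -- `M` is invertible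
    (hM : IsUnit (Matrix.of fun w v : {x : V // x ∉ Lam} => A w.1 v.1))
    -- the substitution on the generators
    (g : V → MvPolynomial V ℚ)
    (hg : ∀ v, g v = if v ∈ Lam then X (π v) else ∑ w : V, A w v • X w) :
    ∃ e : (MvPolynomial V ℚ ⧸ I) ≃ₐ[ℚ] (MvPolynomial V ℚ ⧸ I),
      ∀ p : MvPolynomial V ℚ,
        e (Ideal.Quotient.mk I p) = Ideal.Quotient.mk I (aeval g p) :=
  stmt_11_general V t lam Lam hLam I hI π ρ hπ A hM g hg
end

section
/- Let ρ be a finite set with elements w_0,...,w_d (d ≥ 0), and let (C, D) be twin diagrams on the poset of subsets of ρ valued in Mod_R (C covariant along inclusions, D contravariant, satisfying the twin compatibility on pullback squares of subsets). Given a compatible family u = (u(σ))_{σ ⊊ ρ} in lim_{σ⊊ρ} D(σ), the element u(ρ) := Σ_{σ ⊊ ρ} (−1)^{|ρ∖σ|+1} C(σ⊆ρ)(u(σ)) of D(ρ) satisfies D(ρ⊇μ_k)(u(ρ)) = u(μ_k) for every k, where μ_k = ρ ∖ {w_k}. Consequently D(ρ) → lim_{σ⊊ρ} D(σ) is surjective.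 -/
/-- Let `ρ` be a nonempty finite set and `(C, D)` (written `Dcov`, `Dcon`)
twin diagrams on the Boolean lattice of subsets of `ρ`, valued in `Mod_R`.  Given a
compatible family `u = (u σ)_{σ ⊊ ρ}` in `lim_{σ ⊊ ρ} D(σ)`, the element
`u(ρ) := Σ_{σ ⊊ ρ} (−1)^(|ρ∖σ|+1) C(σ ⊆ ρ)(u σ)` of `D(ρ)` satisfies
`D(ρ ⊇ μ_w)(u(ρ)) = u(μ_w)` for every `w ∈ ρ`, where `μ_w = ρ ∖ {w}`; consequently
`D(ρ) → lim_{σ ⊊ ρ} D(σ)` is surjective (`u(ρ)` restricts to `u σ` on every `σ ⊊ ρ`). -/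
theorem stmt_14 (R : Type*) [CommRing R] (V : Type*) [Fintype V] [DecidableEq V]
    (ρ : Finset V) (hρ : ρ.Nonempty)
    (D : Finset V → Type*) [∀ σ, AddCommGroup (D σ)] [∀ σ, Module R (D σ)]
    (Dcon : ∀ ⦃σ τ : Finset V⦄, σ ⊆ τ → (D τ →ₗ[R] D σ))
    (Dcov : ∀ ⦃σ τ : Finset V⦄, σ ⊆ τ → (D σ →ₗ[R] D τ))
    (hconId : ∀ σ : Finset V, Dcon (Finset.Subset.refl σ) = LinearMap.id)
    (hcovId : ∀ σ : Finset V, Dcov (Finset.Subset.refl σ) = LinearMap.id)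
    (hconComp : ∀ ⦃σ τ υ : Finset V⦄ (h₁ : σ ⊆ τ) (h₂ : τ ⊆ υ),
      (Dcon h₁).comp (Dcon h₂) = Dcon (h₁.trans h₂))
    (hcovComp : ∀ ⦃σ τ υ : Finset V⦄ (h₁ : σ ⊆ τ) (h₂ : τ ⊆ υ),
      (Dcov h₂).comp (Dcov h₁) = Dcov (h₁.trans h₂))
    -- the twin compatibility on pullback squares of subsets of `ρ`
    (htwin : ∀ ⦃σ σ' τ : Finset V⦄, τ ⊆ ρ → ∀ (i : σ ⊆ τ) (i' : σ' ⊆ τ),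
      (Dcon i').comp (Dcov i) =
        (Dcov (Finset.inter_subset_right : σ ∩ σ' ⊆ σ')).comp
          (Dcon (Finset.inter_subset_left : σ ∩ σ' ⊆ σ))) :
    ∀ u : (σ : Finset V) → σ ⊂ ρ → D σ,
      -- `u` is a compatible family over the proper subsets of `ρ`
      (∀ σ τ (hσ : σ ⊂ ρ) (hτ : τ ⊂ ρ) (h : σ ⊆ τ), Dcon h (u τ hτ) = u σ hσ) →
      -- the explicit element restricts to `u μ_w` on each `μ_w = ρ ∖ {w}` …
      (∀ w (hw : w ∈ ρ),
        Dcon (Finset.erase_subset w ρ) (∑ s ∈ (ρ.powerset.filter (· ⊂ ρ)).attach, ((-1 : ℤ) ^ ((ρ \ s.1).card + 1)) • Dcov ((Finset.mem_filter.mp s.2).2).subset (u s.1 (Finset.mem_filter.mp s.2).2)) = u (ρ.erase w) (Finset.erase_ssubset hw))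
      -- … and consequently to `u σ` on every proper subset, so `D(ρ) → lim` is surjective
      ∧ (∀ σ (hσ : σ ⊂ ρ), Dcon hσ.subset (∑ s ∈ (ρ.powerset.filter (· ⊂ ρ)).attach, ((-1 : ℤ) ^ ((ρ \ s.1).card + 1)) • Dcov ((Finset.mem_filter.mp s.2).2).subset (u s.1 (Finset.mem_filter.mp s.2).2)) = u σ hσ) := by
  classical
  intro u hu
  set T := ρ.powerset.filter (· ⊂ ρ) with hT
  set S : D ρ := ∑ s ∈ T.attach,
      ((-1 : ℤ) ^ ((ρ \ s.1).card + 1)) • Dcov ((Finset.mem_filter.mp s.2).2).subset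
        (u s.1 (Finset.mem_filter.mp s.2).2) with hS
  have key : ∀ w (hw : w ∈ ρ),
      Dcon (Finset.erase_subset w ρ) S = u (ρ.erase w) (Finset.erase_ssubset hw) := by
    intro w hw
    set μ : Finset V := ρ.erase w with hμdef
    have hwμ : w ∉ μ := Finset.notMem_erase w ρ
    -- the auxiliary function depending only on the intersection
    set K : Finset V → D μ := fun t =>
      if h : t ⊂ ρ ∧ t ⊆ μ then Dcov h.2 (u t h.1) else 0 with hK
    set F : Finset V → D μ := fun s =>
      ((-1 : ℤ) ^ ((ρ \ s).card + 1)) • K (s ∩ μ) with hF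
    have hmemT : ∀ {s : Finset V}, s ∈ T ↔ s ⊂ ρ := by
      intro s
      simp [hT, Finset.mem_filter, Finset.mem_powerset]
      exact fun h => h.subset
    have step1 : Dcon (Finset.erase_subset w ρ) S = ∑ s ∈ T, F s := by
      rw [hS, map_sum, ← Finset.sum_attach T F]
      refine Finset.sum_congr rfl ?_
      intro s _
      have hs : s.1 ⊂ ρ := (Finset.mem_filter.mp s.2).2
      rw [map_zsmul]
      congr 1
      have twin := LinearMap.congr_fun
        (htwin (Finset.Subset.refl ρ) hs.subset (Finset.erase_subset w ρ))
        (u s.1 hs)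
      simp only [LinearMap.comp_apply] at twin
      rw [twin]
      have hint : s.1 ∩ μ ⊂ ρ := lt_of_le_of_lt Finset.inter_subset_left hs
      rw [hu (s.1 ∩ μ) s.1 hint hs Finset.inter_subset_left]
      have : K (s.1 ∩ μ) = Dcov (Finset.inter_subset_right : s.1 ∩ μ ⊆ μ) (u (s.1 ∩ μ) hint) :=
        dif_pos ⟨hint, Finset.inter_subset_right⟩
      rw [this]
    have hμT : μ ∈ T := hmemT.mpr (Finset.erase_ssubset hw)
    -- the term at μ itself
    have hFμ : F μ = u μ (Finset.erase_ssubset hw) := by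
      have hcard : (ρ \ μ).card = 1 := by
        rw [hμdef, Finset.sdiff_erase_self hw, Finset.card_singleton]
      have hKμ : K (μ ∩ μ) = u μ (Finset.erase_ssubset hw) := by
        rw [Finset.inter_self]
        have h : μ ⊂ ρ ∧ μ ⊆ μ := ⟨Finset.erase_ssubset hw, Finset.Subset.refl μ⟩
        rw [hK]
        simp only [dif_pos h]
        have e : (Dcov h.2 : D μ →ₗ[R] D μ) = LinearMap.id := hcovId μ
        rw [e, LinearMap.id_apply]
      rw [hF]
      simp only [hcard, hKμ]
      norm_num
    -- the pairing lemma
    have pair : ∀ s : Finset V, w ∉ s → insert w s ⊂ ρ → F s + F (insert w s) = 0 := by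
      intro s hws hins
      have h1 : insert w s ∩ μ = s ∩ μ := Finset.insert_inter_of_notMem hwμ
      have h2 : ρ \ insert w s = (ρ \ s).erase w := Finset.sdiff_insert ρ s w
      have hwdiff : w ∈ ρ \ s := Finset.mem_sdiff.mpr ⟨hw, hws⟩
      have hcardpos : 0 < (ρ \ s).card := Finset.card_pos.mpr ⟨w, hwdiff⟩
      have h3 : (ρ \ s).card = (ρ \ insert w s).card + 1 := by
        rw [h2, Finset.card_erase_of_mem hwdiff]
        omega
      rw [hF]
      simp only [h1, h3]
      rw [← add_smul]
      have : ((-1 : ℤ) ^ ((ρ \ insert w s).card + 1 + 1) +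
          (-1 : ℤ) ^ ((ρ \ insert w s).card + 1)) = 0 := by ring
      rw [this, zero_smul]
    have step2 : ∑ s ∈ T.erase μ, F s = 0 := by
      refine Finset.sum_involution
        (fun s _ => if w ∈ s then s.erase w else insert w s) ?_ ?_ ?_ ?_
      · intro s hsmem
        obtain ⟨hsne, hsT⟩ := Finset.mem_erase.mp hsmem
        have hs : s ⊂ ρ := hmemT.mp hsT
        by_cases hws : w ∈ s
        · simp only [if_pos hws]
          have hins : insert w (s.erase w) = s := Finset.insert_erase hws
          have : F (s.erase w) + F (insert w (s.erase w)) = 0 := by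
            refine pair (s.erase w) (Finset.notMem_erase w s) ?_
            rw [hins]; exact hs
          rw [hins] at this
          rw [add_comm]
          exact this
        · simp only [if_neg hws]
          refine pair s hws ?_
          refine lt_of_le_of_ne (Finset.insert_subset hw hs.subset) ?_
          intro h
          apply hsne
          rw [hμdef, ← h, Finset.erase_insert hws]
      · intro s hsmem _
        by_cases hws : w ∈ s
        · simp only [if_pos hws]
          intro h
          exact Finset.notMem_erase w s (by rw [h]; exact hws)
        · simp only [if_neg hws]
          intro h
          exact hws (h ▸ Finset.mem_insert_self w s)
      · intro s hsmem
        obtain ⟨hsne, hsT⟩ := Finset.mem_erase.mp hsmem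
        have hs : s ⊂ ρ := hmemT.mp hsT
        by_cases hws : w ∈ s
        · simp only [if_pos hws]
          refine Finset.mem_erase.mpr ⟨?_, hmemT.mpr (lt_of_le_of_lt (Finset.erase_subset w s) hs)⟩
          intro h
          apply hs.ne
          rw [← Finset.insert_erase hws, h, hμdef, Finset.insert_erase hw]
        · simp only [if_neg hws]
          refine Finset.mem_erase.mpr ⟨?_, hmemT.mpr ?_⟩
          · intro h
            exact hwμ (h ▸ Finset.mem_insert_self w s)
          · refine lt_of_le_of_ne (Finset.insert_subset hw hs.subset) ?_
            intro h
            apply hsne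
            rw [hμdef, ← h, Finset.erase_insert hws]
      · intro s hsmem
        by_cases hws : w ∈ s
        · simp only [if_pos hws]
          rw [if_neg (Finset.notMem_erase w s), Finset.insert_erase hws]
        · simp only [if_neg hws]
          rw [if_pos (Finset.mem_insert_self w s), Finset.erase_insert hws]
    rw [step1, ← Finset.add_sum_erase T F hμT, step2, add_zero, hFμ]
  refine ⟨key, ?_⟩
  intro σ hσ
  obtain ⟨w, hwρ, hwσ⟩ := Finset.exists_of_ssubset hσ
  have h1 : σ ⊆ ρ.erase w := Finset.subset_erase.mpr ⟨hσ.subset, hwσ⟩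
  have e : (Dcon h1).comp (Dcon (Finset.erase_subset w ρ)) = Dcon hσ.subset :=
    hconComp h1 (Finset.erase_subset w ρ)
  calc Dcon hσ.subset S = Dcon h1 (Dcon (Finset.erase_subset w ρ) S) :=
        (LinearMap.congr_fun e S).symm
    _ = Dcon h1 (u (ρ.erase w) (Finset.erase_ssubset hwρ)) := by rw [key w hwρ]
    _ = u σ hσ := hu σ (ρ.erase w) hσ (Finset.erase_ssubset hwρ) h1
end
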